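/- arXiv:2009.07546 — 2 statements merged into one kernel-verified Lean document; each statement's English description precedes it below -/
import Mathlib

section
/- Greedy approximation guarantee: Let g : 2^V → ℝ be a monotone submodular set function on a finite ground set V with g(∅) = 0, and let k ≤ |V|. Let S* be the set produced by the greedy algorithm that starts from the empty set and, for k iterations, adds the element with maximal marginal gain. Then g(S*) ≥ (1 − 1/e)·max{g(S) : S ⊆ V, |S| = k}. -/
/-!
Fix a competitor `T` with `#T = k` and let `dᵢ = g T - g (Sᵢ)`. By submodularity,
`g T ≤ g (Sᵢ ∪ T)` exceeds `g Sᵢ` by at most the sum of the `k` single-element marginal gains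
over `T`, each of which is at most the greedy gain `g Sᵢ₊₁ - g Sᵢ = dᵢ - dᵢ₊₁`. Hence
`dᵢ ≤ k (dᵢ - dᵢ₊₁)`, i.e. `dᵢ₊₁ ≤ (1 - 1/k) dᵢ`, so `dₖ ≤ (1 - 1/k)ᵏ g T ≤ e⁻¹ g T`.
-/

open Finset

section Greedy

variable {V : Type*} [DecidableEq V]

def IsGreedyChoice (g : Finset V → ℝ) (A : Finset V) (x : V) : Prop :=
  ∀ y ∉ A, g (insert y A) ≤ g (insert x A)

variable {g : Finset V → ℝ}

theorem le_add_sum_marginal_of_submodular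
    (hsub : ∀ A B : Finset V, g (A ∪ B) + g (A ∩ B) ≤ g A + g B) (A T : Finset V) :
    g (A ∪ T) ≤ g A + ∑ y ∈ T, (g (insert y A) - g A) := by
  induction T using Finset.induction_on with
  | empty => simp
  | @insert a T haT ih =>
    have hinter : insert a A ∩ (A ∪ T) = A := by
      ext x
      simp only [mem_inter, mem_insert, mem_union]
      grind
    have hunion : A ∪ insert a T = insert a A ∪ (A ∪ T) := by
      ext x
      simp only [mem_union, mem_insert]
      tauto
    have hstep := hsub (insert a A) (A ∪ T)
    rw [hinter] at hstep
    rw [hunion, sum_insert haT]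
    linarith

theorem le_add_card_mul_gain_of_isGreedyChoice (hmono : Monotone g)
    (hsub : ∀ A B : Finset V, g (A ∪ B) + g (A ∩ B) ≤ g A + g B) {A : Finset V} {x : V}
    (hx : IsGreedyChoice g A x) (T : Finset V) :
    g T ≤ g A + #T * (g (insert x A) - g A) := by
  have hgain : ∀ y ∈ T, g (insert y A) - g A ≤ g (insert x A) - g A := by
    intro y _
    by_cases hy : y ∈ A
    · rw [insert_eq_of_mem hy, sub_self, sub_nonneg]
      exact hmono (subset_insert x A)
    · exact sub_le_sub_right (hx y hy) _
  calc g T ≤ g (A ∪ T) := hmono subset_union_right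
    _ ≤ g A + ∑ y ∈ T, (g (insert y A) - g A) := le_add_sum_marginal_of_submodular hsub A T
    _ ≤ g A + #T * (g (insert x A) - g A) := by
      grw [sum_le_sum hgain, sum_const, nsmul_eq_mul]

theorem sub_le_one_sub_inv_mul_of_isGreedyChoice (hmono : Monotone g)
    (hsub : ∀ A B : Finset V, g (A ∪ B) + g (A ∩ B) ≤ g A + g B) {A T : Finset V} {x : V}
    (hT : T.Nonempty) (hx : IsGreedyChoice g A x) :
    g T - g (insert x A) ≤ (1 - 1 / #T) * (g T - g A) := by
  have hcard : (0 : ℝ) < #T := by exact_mod_cast hT.card_pos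
  have hbound := le_add_card_mul_gain_of_isGreedyChoice hmono hsub hx T
  have hdiv : (g T - g A) / #T ≤ g (insert x A) - g A := by
    rw [div_le_iff₀ hcard]
    linarith
  calc g T - g (insert x A) ≤ (g T - g A) - (g T - g A) / #T := by linarith
    _ = (1 - 1 / #T) * (g T - g A) := by ring

end Greedy

theorem greedy_approximation_guarantee_general {V : Type*} [DecidableEq V]
    (g : Finset V → ℝ)
    (hmono : ∀ A B : Finset V, A ⊆ B → g A ≤ g B)
    (hsub : ∀ A B : Finset V, g (A ∪ B) + g (A ∩ B) ≤ g A + g B)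
    (h0 : g ∅ = 0)
    (k : ℕ)
    (S : ℕ → Finset V) (hS0 : S 0 = ∅)
    (hgreedy : ∀ i < k, ∃ x ∉ S i,
      S (i + 1) = insert x (S i) ∧
      ∀ y ∉ S i, g (insert y (S i)) ≤ g (insert x (S i))) :
    ∀ T : Finset V, T.card = k →
      (1 - 1 / Real.exp 1) * g T ≤ g (S k) := by
  intro T hT
  obtain rfl | hk := Nat.eq_zero_or_pos k
  · rw [card_eq_zero.1 hT, hS0, h0, mul_zero]
  have hTne : T.Nonempty := card_pos.1 (hT ▸ hk)
  have hgT : 0 ≤ g T := h0 ▸ hmono ∅ T (empty_subset T)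
  have hgap : ∀ i < k, g T - g (S (i + 1)) ≤ (1 - 1 / k) * (g T - g (S i)) := by
    intro i hi
    obtain ⟨x, -, hSx, hx⟩ := hgreedy i hi
    rw [hSx, ← hT]
    exact sub_le_one_sub_inv_mul_of_isGreedyChoice hmono hsub hTne hx
  have hratio : 0 ≤ 1 - 1 / (k : ℝ) := by
    rw [sub_nonneg, div_le_one (by exact_mod_cast hk)]
    exact_mod_cast hk
  have hpow : (1 - 1 / (k : ℝ)) ^ k ≤ 1 / Real.exp 1 := by
    rw [one_div (Real.exp 1), ← Real.exp_neg]
    exact Real.one_sub_div_pow_le_exp_neg (by exact_mod_cast hk)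
  have hfinal := le_geom (u := fun i => g T - g (S i)) hratio k hgap
  simp only [hS0, h0, sub_zero] at hfinal
  linarith [mul_le_mul_of_nonneg_right hpow hgT]

/-- Nemhauser–Wolsey–Fisher greedy approximation guarantee: for a monotone
submodular `g` with `g ∅ = 0` and budget `k ≤ |V|`, the set `S k` produced by
`k` steps of the greedy algorithm satisfies
`g (S k) ≥ (1 - 1/e) · max {g T : |T| = k}`. -/
theorem greedy_approximation_guarantee {V : Type*} [Fintype V] [DecidableEq V]
    (g : Finset V → ℝ)
    (hmono : ∀ A B : Finset V, A ⊆ B → g A ≤ g B)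
    (hsub : ∀ A B : Finset V, g (A ∪ B) + g (A ∩ B) ≤ g A + g B)
    (h0 : g ∅ = 0)
    (k : ℕ) (hk : k ≤ Fintype.card V)
    (S : ℕ → Finset V) (hS0 : S 0 = ∅)
    (hgreedy : ∀ i < k, ∃ x ∉ S i,
      S (i + 1) = insert x (S i) ∧
      ∀ y ∉ S i, g (insert y (S i)) ≤ g (insert x (S i))) :
    ∀ T : Finset V, T.card = k →
      (1 - 1 / Real.exp 1) * g T ≤ g (S k) :=
  greedy_approximation_guarantee_general g hmono hsub h0 k S hS0 hgreedy
end

section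
/- Greedy iterate lower bound: With notation as in the greedy algorithm for a monotone submodular function g with g(∅)=0 and cardinality budget k, for every iteration i, g(S_{i+1}) − g(S_i) ≥ (1/k)·(OPT − g(S_i)), where OPT = max{g(S): |S| = k}. Consequently g(S_i) ≥ (1 − (1 − 1/k)^i)·OPT. -/
lemma submod_expand {V : Type*} [DecidableEq V]
    (g : Finset V → ℝ)
    (hmono : ∀ A B : Finset V, A ⊆ B → g A ≤ g B)
    (hsub : ∀ A B : Finset V, g (A ∪ B) + g (A ∩ B) ≤ g A + g B)
    (A : Finset V) : ∀ T : Finset V,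
    g (A ∪ T) ≤ g A + ∑ x ∈ T, (g (insert x A) - g A) := by
  intro T
  induction T using Finset.induction_on with
  | empty => simp
  | @insert a T ha ih =>
    have hU : A ∪ insert a T = (A ∪ T) ∪ insert a A := by
      ext x; simp [Finset.mem_insert, Finset.mem_union]; tauto
    have h1 := hsub (A ∪ T) (insert a A)
    have h2 : g A ≤ g ((A ∪ T) ∩ insert a A) := by
      apply hmono
      intro x hx
      simp [Finset.mem_inter, Finset.mem_union, Finset.mem_insert, hx]
    have hsum : ∑ x ∈ insert a T, (g (insert x A) - g A)
        = (g (insert a A) - g A) + ∑ x ∈ T, (g (insert x A) - g A) := by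
      rw [Finset.sum_insert ha]
    rw [hU, hsum]
    linarith

/-- Greedy iterate lower bound: at each iteration of the greedy algorithm for a
monotone submodular function with budget `k`,
`g (S (i+1)) - g (S i) ≥ (1/k) (OPT - g (S i))`, and consequently
`g (S i) ≥ (1 - (1 - 1/k)^i) · OPT`, where `OPT = max {g T : |T| = k}`. -/
theorem greedy_iterate_lower_bound {V : Type*} [Fintype V] [DecidableEq V]
    (g : Finset V → ℝ)
    (hmono : ∀ A B : Finset V, A ⊆ B → g A ≤ g B)
    (hsub : ∀ A B : Finset V, g (A ∪ B) + g (A ∩ B) ≤ g A + g B)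
    (h0 : g ∅ = 0)
    (k : ℕ) (hkpos : 0 < k) (hk : k ≤ Fintype.card V)
    (S : ℕ → Finset V) (hS0 : S 0 = ∅)
    (hgreedy : ∀ i < k, ∃ x ∉ S i,
      S (i + 1) = insert x (S i) ∧
      ∀ y ∉ S i, g (insert y (S i)) ≤ g (insert x (S i))) :
    ∀ T : Finset V, T.card = k →
      (∀ i < k, (1 / (k : ℝ)) * (g T - g (S i)) ≤ g (S (i + 1)) - g (S i)) ∧
      (∀ i ≤ k, (1 - (1 - 1 / (k : ℝ)) ^ i) * g T ≤ g (S i)) := by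
  intro T hT
  have hkR : (0:ℝ) < (k:ℝ) := by exact_mod_cast hkpos
  have hgT : 0 ≤ g T := by
    have := hmono ∅ T (Finset.empty_subset T); linarith
  have key : ∀ i < k, (1 / (k : ℝ)) * (g T - g (S i)) ≤ g (S (i + 1)) - g (S i) := by
    intro i hi
    obtain ⟨x, hx, hSx, hmax⟩ := hgreedy i hi
    set M : ℝ := g (S (i+1)) - g (S i) with hM
    have hM0 : 0 ≤ M := by
      have := hmono (S i) (S (i+1)) (by rw [hSx]; exact Finset.subset_insert _ _)
      linarith
    have hterm : ∀ y ∈ T, g (insert y (S i)) - g (S i) ≤ M := by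
      intro y _
      by_cases hy : y ∈ S i
      · rw [Finset.insert_eq_self.mpr hy]; linarith
      · have := hmax y hy; rw [hM, hSx]; linarith
    have hexp := submod_expand g hmono hsub (S i) T
    have hTs : g T ≤ g (S i ∪ T) := hmono _ _ Finset.subset_union_right
    have hsum : ∑ x ∈ T, (g (insert x (S i)) - g (S i)) ≤ ∑ _x ∈ T, M :=
      Finset.sum_le_sum hterm
    rw [Finset.sum_const, hT, nsmul_eq_mul] at hsum
    have : g T - g (S i) ≤ (k:ℝ) * M := by linarith
    rw [div_mul_eq_mul_div, one_mul, div_le_iff₀ hkR]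
    linarith [mul_comm (k:ℝ) M]
  refine ⟨key, ?_⟩
  intro i hi
  induction i with
  | zero => simp [hS0, h0]
  | succ n ih =>
    have hn : n < k := hi
    have ihn := ih (le_of_lt hn)
    have hk1 := key n hn
    have hfac : (0:ℝ) ≤ 1 - 1/(k:ℝ) := by
      have : 1/(k:ℝ) ≤ 1 := by
        rw [div_le_one hkR]; exact_mod_cast hkpos
      linarith
    have hpow : (1 - (1 - 1/(k:ℝ))^n) * g T ≤ g (S n) := ihn
    -- g (S (n+1)) ≥ (1/k) g T + (1 - 1/k) g (S n)
    have step : (1/(k:ℝ)) * g T + (1 - 1/(k:ℝ)) * g (S n) ≤ g (S (n+1)) := by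
      nlinarith
    have : (1 - (1 - 1/(k:ℝ))^(n+1)) * g T
        ≤ (1/(k:ℝ)) * g T + (1 - 1/(k:ℝ)) * ((1 - (1 - 1/(k:ℝ))^n) * g T) := by
      ring_nf
      nlinarith [pow_nonneg hfac n]
    nlinarith [mul_le_mul_of_nonneg_left hpow hfac]
end
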